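/- Let ψ : ℝ^n → ℝ be Lipschitz and F(y,s) = (η_s * ψ)(y) as above with ‖∂F/∂s‖_∞ ≤ C_n‖∇ψ‖_∞. Set c_0 = 1 + C_n‖∇ψ‖_∞ and ρ(y,s) = (y, c_0 s + F(y,s)). Then ρ is an injective map from ℝ^{n+1}_+ = {(y,s) : s > 0} onto {(x,t) : t > ψ(x)}, and its Jacobian determinant satisfies 1 ≤ det ∇ρ(y,s) ≤ 1 + 2C_n‖∇ψ‖_∞. -/

import Mathlib

open MeasureTheory

theorem stmt13 {n : ℕ} (η : EuclideanSpace ℝ (Fin n) → ℝ)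
    (hsm : ContDiff ℝ (⊤ : ℕ∞) η) (heven : ∀ y, η (-y) = η y) (hnn : ∀ y, 0 ≤ η y)
    (hsupp : Function.support η ⊆ Metric.closedBall 0 (1 / 2))
    (hη1 : ∫ y, η y = 1)
    (ψ : EuclideanSpace ℝ (Fin n) → ℝ) (K : NNReal) (hψ : LipschitzWith K ψ)
    (F : EuclideanSpace ℝ (Fin n) → ℝ → ℝ)
    (hF : ∀ y s, F y s = ∫ z, (s ^ n)⁻¹ * η (s⁻¹ • (y - z)) * ψ z)
    (Cn : ℝ) (hCn : Cn = (n : ℝ) * ∫ z, η z * ‖z‖)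
    (hFs : ∀ (y : EuclideanSpace ℝ (Fin n)) (s : ℝ), 0 < s →
      ∃ d : ℝ, HasDerivAt (F y) d s ∧ |d| ≤ Cn * K)
    (c0 : ℝ) (hc0 : c0 = 1 + Cn * K)
    (ρ : EuclideanSpace ℝ (Fin n) × ℝ → EuclideanSpace ℝ (Fin n) × ℝ)
    (hρ : ∀ p, ρ p = (p.1, c0 * p.2 + F p.1 p.2)) :
    Set.InjOn ρ {p : EuclideanSpace ℝ (Fin n) × ℝ | 0 < p.2} ∧
    ρ '' {p : EuclideanSpace ℝ (Fin n) × ℝ | 0 < p.2} =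
      {q : EuclideanSpace ℝ (Fin n) × ℝ | ψ q.1 < q.2} ∧
    (∀ (y : EuclideanSpace ℝ (Fin n)) (s : ℝ), 0 < s → ∀ d : ℝ,
      HasDerivAt (F y) d s → 1 ≤ c0 + d ∧ c0 + d ≤ 1 + 2 * Cn * K) := by
  have hK0 : (0:ℝ) ≤ K := K.2
  have hCn0 : 0 ≤ Cn := by
    rw [hCn]
    exact mul_nonneg (Nat.cast_nonneg n)
      (integral_nonneg fun z => mul_nonneg (hnn z) (norm_nonneg z))
  have hCnK : 0 ≤ Cn * K := mul_nonneg hCn0 hK0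
  have hc01 : 1 ≤ c0 := by rw [hc0]; linarith
  -- Part 3
  have hdet : ∀ (y : EuclideanSpace ℝ (Fin n)) (s : ℝ), 0 < s → ∀ d : ℝ,
      HasDerivAt (F y) d s → 1 ≤ c0 + d ∧ c0 + d ≤ 1 + 2 * Cn * K := by
    intro y s hs d hd
    obtain ⟨d', hd', hbd⟩ := hFs y s hs
    have hdd : d = d' := hd.unique hd'
    subst hdd
    obtain ⟨h1, h2⟩ := abs_le.mp hbd
    constructor <;> [linarith [hc0] ; linarith [hc0]]
  -- integrability of η
  have hηc : Continuous η := hsm.continuous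
  have hηcs : HasCompactSupport η :=
    HasCompactSupport.intro (isCompact_closedBall 0 (1/2))
      (Function.support_subset_iff'.mp hsupp)
  have hηint : Integrable η := hηc.integrable_of_hasCompactSupport hηcs
  -- convolution identity
  have hconv : ∀ (y : EuclideanSpace ℝ (Fin n)) (s : ℝ), 0 < s →
      F y s = ∫ u, η u * ψ (y - s • u) := by
    intro y s hs
    rw [hF]
    have h0 : (∫ z, (s ^ n)⁻¹ * η (s⁻¹ • (y - z)) * ψ (y - (y - z)))
        = ∫ z, (s ^ n)⁻¹ * η (s⁻¹ • z) * ψ (y - z) :=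
      integral_sub_left_eq_self (fun w => (s ^ n)⁻¹ * η (s⁻¹ • w) * ψ (y - w)) volume y
    have h1 : (∫ z, (s ^ n)⁻¹ * η (s⁻¹ • (y - z)) * ψ z)
        = ∫ z, (s ^ n)⁻¹ * η (s⁻¹ • z) * ψ (y - z) := by
      rw [← h0]; congr 1; ext z; rw [sub_sub_cancel]
    have h2 := Measure.integral_comp_inv_smul_of_nonneg volume
      (fun u => (s ^ n)⁻¹ * (η u * ψ (y - s • u))) hs.le
    simp only [smul_inv_smul₀ hs.ne'] at h2
    rw [h1]
    calc ∫ z, (s ^ n)⁻¹ * η (s⁻¹ • z) * ψ (y - z)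
        = ∫ z, (s ^ n)⁻¹ * (η (s⁻¹ • z) * ψ (y - s • s⁻¹ • z)) := by
          congr 1; ext z; rw [smul_inv_smul₀ hs.ne']; ring
      _ = (s ^ Module.finrank ℝ (EuclideanSpace ℝ (Fin n))) •
            ∫ u, (s ^ n)⁻¹ * (η u * ψ (y - s • u)) := by
          rw [← h2]; congr 1; ext z; rw [smul_inv_smul₀ hs.ne']
      _ = ∫ u, η u * ψ (y - s • u) := by
          rw [finrank_euclideanSpace_fin, integral_const_mul, smul_eq_mul, ← mul_assoc,
            mul_inv_cancel₀ (pow_ne_zero n hs.ne'), one_mul]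
  -- basic estimate
  have hest : ∀ (y : EuclideanSpace ℝ (Fin n)) (s : ℝ), 0 < s →
      |F y s - ψ y| ≤ K * s / 2 := by
    intro y s hs
    rw [hconv y s hs]
    have hcont : Continuous fun u : EuclideanSpace ℝ (Fin n) => ψ (y - s • u) :=
      hψ.continuous.comp (continuous_const.sub (continuous_id.const_smul s))
    have hint1 : Integrable (fun u => η u * ψ (y - s • u)) :=
      (hηc.mul hcont).integrable_of_hasCompactSupport (hηcs.mul_right)
    have heq : (∫ u, η u * ψ (y - s • u)) - ψ y
        = ∫ u, η u * (ψ (y - s • u) - ψ y) := by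
      have := integral_sub hint1 (hηint.mul_const (ψ y))
      simp only [mul_sub] at this ⊢
      rw [this, integral_mul_const, hη1, one_mul]
    rw [heq]
    have hb : ∀ u, ‖η u * (ψ (y - s • u) - ψ y)‖ ≤ η u * (K * s / 2) := by
      intro u
      by_cases hu : η u = 0
      · simp [hu]
      · have hu2 : u ∈ Metric.closedBall (0 : EuclideanSpace ℝ (Fin n)) (1/2) :=
          hsupp hu
        have hnu : ‖u‖ ≤ 1/2 := by
          simpa [mem_closedBall_zero_iff] using hu2
        have hΔ : |ψ (y - s • u) - ψ y| ≤ K * s / 2 := by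
          have h1 := hψ.dist_le_mul (y - s • u) y
          rw [Real.dist_eq] at h1
          have hdist : dist (y - s • u) y = s * ‖u‖ := by
            rw [dist_eq_norm]
            simp [norm_smul, abs_of_pos hs]
          rw [hdist] at h1
          have h3 : (K : ℝ) * (s * ‖u‖) ≤ (K : ℝ) * (s * (1/2)) := by
            gcongr
          linarith
        rw [norm_mul, Real.norm_eq_abs, Real.norm_eq_abs, abs_of_nonneg (hnn u)]
        exact mul_le_mul_of_nonneg_left hΔ (hnn u)
    have hnorm := norm_integral_le_of_norm_le (hηint.mul_const (K * s / 2))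
      (Filter.Eventually.of_forall hb)
    rw [integral_mul_const, hη1, one_mul] at hnorm
    simpa [Real.norm_eq_abs] using hnorm
  -- Lipschitz bound from derivative bound
  have hlip : ∀ (y : EuclideanSpace ℝ (Fin n)) (a b : ℝ), 0 < a → a ≤ b →
      |F y b - F y a| ≤ Cn * K * (b - a) := by
    intro y a b ha hab
    classical
    set f' : ℝ → ℝ := fun t => if h : 0 < t then (hFs y t h).choose else 0 with hf'
    have hd : ∀ t ∈ Set.Icc a b, HasDerivWithinAt (F y) (f' t) (Set.Icc a b) t := by
      intro t ht
      have h0 : 0 < t := lt_of_lt_of_le ha ht.1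
      simp only [hf', dif_pos h0]
      exact (hFs y t h0).choose_spec.1.hasDerivWithinAt
    have hbd : ∀ t ∈ Set.Ico a b, ‖f' t‖ ≤ Cn * K := by
      intro t ht
      have h0 : 0 < t := lt_of_lt_of_le ha ht.1
      simp only [hf', dif_pos h0, Real.norm_eq_abs]
      exact (hFs y t h0).choose_spec.2
    have := norm_image_sub_le_of_norm_deriv_le_segment' hd hbd b (Set.right_mem_Icc.2 hab)
    simpa [Real.norm_eq_abs] using this
  -- sharp bound |F y s - ψ y| ≤ Cn K s
  have hFbound : ∀ (y : EuclideanSpace ℝ (Fin n)) (s : ℝ), 0 < s →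
      |F y s - ψ y| ≤ Cn * K * s := by
    intro y s hs
    have key : ∀ ε : ℝ, 0 < ε → ε ≤ s → |F y s - ψ y| ≤ Cn * K * s + K * ε / 2 := by
      intro ε hε hεs
      calc |F y s - ψ y| ≤ |F y s - F y ε| + |F y ε - ψ y| := abs_sub_le _ _ _
        _ ≤ Cn * K * (s - ε) + K * ε / 2 :=
            add_le_add (by simpa [abs_sub_comm] using hlip y ε s hε hεs) (hest y ε hε)
        _ ≤ Cn * K * s + K * ε / 2 := by nlinarith [hCnK, hε.le]
    refine le_of_forall_pos_le_add ?_
    intro δ hδ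
    have hKδ : (0:ℝ) < δ / (K + 1) := div_pos hδ (by linarith)
    set ε := min s (δ / (K + 1)) with hεdef
    have hε : 0 < ε := lt_min hs hKδ
    have hεs : ε ≤ s := min_le_left _ _
    have h1 := key ε hε hεs
    have h2 : (K : ℝ) * ε / 2 ≤ δ := by
      have hεle : ε ≤ δ / (K + 1) := min_le_right _ _
      have := mul_le_mul_of_nonneg_left hεle hK0
      have hmul : (K : ℝ) * (δ / (K + 1)) ≤ δ := by
        rw [mul_div_assoc' (K:ℝ) δ (K+1)] at *
        rw [div_le_iff₀ (by linarith : (0:ℝ) < K + 1)]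
        nlinarith [hδ.le]
      linarith
    linarith
  -- g(s) ≥ ψ y + s
  have hgt : ∀ (y : EuclideanSpace ℝ (Fin n)) (s : ℝ), 0 < s →
      ψ y + s ≤ c0 * s + F y s := by
    intro y s hs
    have h := (abs_le.mp (hFbound y s hs)).1
    have hc : c0 * s = s + Cn * K * s := by rw [hc0]; ring
    linarith
  -- strict monotonicity
  have hmono : ∀ y : EuclideanSpace ℝ (Fin n),
      StrictMonoOn (fun s => c0 * s + F y s) (Set.Ioi (0:ℝ)) := by
    intro y
    classical
    set f' : ℝ → ℝ := fun t => if h : 0 < t then c0 + (hFs y t h).choose else 1 with hf'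
    have hder : ∀ t : ℝ, 0 < t →
        HasDerivAt (fun s => c0 * s + F y s) (f' t) t := by
      intro t ht
      simp only [hf', dif_pos ht]
      have h1 : HasDerivAt (fun s : ℝ => c0 * s) c0 t := by
        simpa using (hasDerivAt_id t).const_mul c0
      exact h1.add (hFs y t ht).choose_spec.1
    refine strictMonoOn_of_hasDerivWithinAt_pos (f' := f') (convex_Ioi 0) ?_ ?_ ?_
    · intro t ht
      exact (hder t ht).continuousAt.continuousWithinAt
    · intro t ht
      rw [interior_Ioi] at ht
      exact ((hder t ht).hasDerivWithinAt).mono (by rw [interior_Ioi])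
    · intro t ht
      rw [interior_Ioi] at ht
      have ht' : 0 < t := ht
      simp only [hf', dif_pos ht']
      have := (abs_le.mp (hFs y t ht').choose_spec.2).1
      linarith
  refine ⟨?_, ?_, hdet⟩
  · -- injectivity
    intro p hp q hq heq
    rw [hρ p, hρ q] at heq
    obtain ⟨h1, h2⟩ := Prod.ext_iff.mp heq
    simp only at h1 h2
    rw [h1] at h2
    have := (hmono q.1).injOn hp hq h2
    exact Prod.ext h1 this
  · -- image
    ext q
    obtain ⟨x, t⟩ := q
    simp only [Set.mem_image, Set.mem_setOf_eq]
    constructor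
    · rintro ⟨⟨y, s⟩, hs, heq⟩
      rw [hρ] at heq
      simp only [Prod.mk.injEq] at heq
      obtain ⟨h1, h2⟩ := heq
      subst h1
      simp only at hs ⊢
      have h3 := hgt y s hs
      linarith
    · intro hxt
      change ψ x < t at hxt
      set g : ℝ → ℝ := fun s => c0 * s + F x s with hg
      have hgcont : ∀ s : ℝ, 0 < s → ContinuousAt g s := by
        intro s hs
        obtain ⟨d, hd, _⟩ := hFs x s hs
        have h1 : HasDerivAt (fun s : ℝ => c0 * s) c0 s := by
          simpa using (hasDerivAt_id s).const_mul c0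
        exact (h1.add hd).continuousAt
      have hden : (0:ℝ) < c0 + Cn * K := by linarith
      set s₁ : ℝ := (t - ψ x) / (2 * (c0 + Cn * K)) with hs₁def
      have hs₁ : 0 < s₁ := div_pos (by linarith) (by linarith)
      have hA : (c0 + Cn * K) * s₁ = (t - ψ x) / 2 := by
        rw [hs₁def]
        field_simp
      have hgs₁ : g s₁ < t := by
        have hF1 := (abs_le.mp (hFbound x s₁ hs₁)).2
        simp only [hg]
        nlinarith
      set s₂ : ℝ := max s₁ (t - ψ x) with hs₂def
      have hs₁₂ : s₁ ≤ s₂ := le_max_left _ _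
      have hs₂pos : 0 < s₂ := lt_of_lt_of_le hs₁ hs₁₂
      have hgs₂ : t ≤ g s₂ := by
        have := hgt x s₂ hs₂pos
        have h2 : t - ψ x ≤ s₂ := le_max_right _ _
        simp only [hg]
        linarith
      have hIVT := intermediate_value_Icc hs₁₂
        (fun s hs => (hgcont s (lt_of_lt_of_le hs₁ hs.1)).continuousWithinAt)
      obtain ⟨s, hsmem, hgs⟩ := hIVT ⟨hgs₁.le, hgs₂⟩
      refine ⟨(x, s), lt_of_lt_of_le hs₁ hsmem.1, ?_⟩
      rw [hρ]
      simp only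
      rw [show c0 * s + F x s = g s from rfl, hgs]
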